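/- Let F = (i : X → S, o : Y → S, v) and G = (i' : Y → T, o' : Z → T, w) be open dynamical systems between finite types, and let P be a finite type with jS : S → P, jT : T → P forming a pushout of o and i' in the category of types, so that the composite G ∘ F is the open dynamical system with apex P, legs jS ∘ i and jT ∘ o', and vector field u = jS_* ∘ v ∘ jS^* + jT_* ∘ w ∘ jT^*. Then black-boxing is functorial: ■(G ∘ F) equals the relational composite of ■(F) and ■(G); that is, a pair ((p, I), (r, Q)) lies in ■(G ∘ F) if and only if there exist q ∈ ℝ^Y and O ∈ ℝ^Y with ((p, I), (q, O)) ∈ ■(F) and ((q, O), (r, Q)) ∈ ■(G). -/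

import Mathlib

open scoped Classical

/-- The pushforward of a function `ψ : S → ℝ` along `f : S → S'`. -/
noncomputable def pushforward {S S' : Type} [Fintype S] (f : S → S') (ψ : S → ℝ) : S' → ℝ :=
  fun s' => ∑ s : S, if f s = s' then ψ s else 0

/-- The pullback of a function `ψ : S' → ℝ` along `f : S → S'`. -/
def pullback {S S' : Type} (f : S → S') (ψ : S' → ℝ) : S → ℝ := ψ ∘ f

lemma pushforward_add {S S' : Type} [Fintype S] (f : S → S') (a b : S → ℝ) :
    pushforward f (a + b) = pushforward f a + pushforward f b := by
  funext s'
  simp only [pushforward, Pi.add_apply, ← Finset.sum_add_distrib]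
  refine Finset.sum_congr rfl fun s _ => ?_
  split <;> simp

lemma pushforward_smul {S S' : Type} [Fintype S] (f : S → S') (r : ℝ) (a : S → ℝ) :
    pushforward f (r • a) = r • pushforward f a := by
  funext s'
  simp only [pushforward, Pi.smul_apply, smul_eq_mul, Finset.mul_sum]
  refine Finset.sum_congr rfl fun s _ => ?_
  split <;> simp

lemma pushforward_sub {S S' : Type} [Fintype S] (f : S → S') (a b : S → ℝ) :
    pushforward f (a - b) = pushforward f a - pushforward f b := by
  funext s'
  simp only [pushforward, Pi.sub_apply, ← Finset.sum_sub_distrib]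
  refine Finset.sum_congr rfl fun s _ => ?_
  split <;> simp

lemma pushforward_comp {S T U : Type} [Fintype S] [Fintype T] (f : S → T) (g : T → U)
    (a : S → ℝ) : pushforward (g ∘ f) a = pushforward g (pushforward f a) := by
  funext u
  simp only [pushforward, Function.comp_apply]
  have step : ∀ t : T, (if g t = u then ∑ s : S, if f s = t then a s else 0 else 0)
      = ∑ s : S, if f s = t then (if g t = u then a s else 0) else 0 := by
    intro t
    split
    · exact Finset.sum_congr rfl fun s _ => by split <;> simp_all
    · simp
  rw [Finset.sum_congr rfl fun t _ => step t, Finset.sum_comm]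
  refine Finset.sum_congr rfl fun s _ => ?_
  rw [Finset.sum_ite_eq Finset.univ (f s) (fun t => if g t = u then a s else 0)]
  simp

lemma sum_mul_pushforward {S S' : Type} [Fintype S] [Fintype S'] (f : S → S')
    (φ : S' → ℝ) (a : S → ℝ) :
    ∑ p : S', φ p * pushforward f a p = ∑ s : S, φ (f s) * a s := by
  simp only [pushforward, Finset.mul_sum]
  rw [Finset.sum_comm]
  refine Finset.sum_congr rfl fun s _ => ?_
  have : ∀ p, (φ p * if f s = p then a s else 0) = (if f s = p then φ p * a s else 0) := by
    intro p; split <;> simp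
  rw [Finset.sum_congr rfl fun p _ => this p,
    Finset.sum_ite_eq Finset.univ (f s) (fun p => φ p * a s)]
  simp

/-- Key flow lemma: if `jS_* a = jT_* c` and every pair `(f, g)` with `f ∘ o = g ∘ i'`
factors through `P`, then `(a, c)` is in the image of `(o_*, i'_*)`. -/
lemma flow_exists {Y S T P : Type} [Fintype Y] [Fintype S] [Fintype T] [Fintype P]
    (o : Y → S) (i' : Y → T) (jS : S → P) (jT : T → P)
    (hdesc : ∀ (f : S → ℝ) (g : T → ℝ), f ∘ o = g ∘ i' →
      ∃ h : P → ℝ, f = h ∘ jS ∧ g = h ∘ jT)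
    (a : S → ℝ) (c : T → ℝ) (hac : pushforward jS a = pushforward jT c) :
    ∃ O : Y → ℝ, pushforward o O = a ∧ pushforward i' O = c := by
  classical
  -- work in Euclidean space
  let M : EuclideanSpace ℝ Y →ₗ[ℝ] EuclideanSpace ℝ (S ⊕ T) :=
    { toFun := fun O => WithLp.toLp 2 (Sum.elim (pushforward o O) (pushforward i' O))
      map_add' := fun O O' => by
        ext st
        cases st with
        | inl s => exact congrFun (pushforward_add o O O') s
        | inr t => exact congrFun (pushforward_add i' O O') t
      map_smul' := fun r O => by
        ext st
        cases st with
        | inl s => exact congrFun (pushforward_smul o r O) s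
        | inr t => exact congrFun (pushforward_smul i' r O) t }
  set K : Submodule ℝ (EuclideanSpace ℝ (S ⊕ T)) := LinearMap.range M with hK
  have hinner : ∀ x y : EuclideanSpace ℝ (S ⊕ T),
      (inner ℝ x y : ℝ) = ∑ st : S ⊕ T, x st * y st := by
    intro x y
    simp [PiLp.inner_apply, RCLike.inner_apply, mul_comm]
  set x : EuclideanSpace ℝ (S ⊕ T) := WithLp.toLp 2 (Sum.elim a c) with hx
  have hxK : x ∈ Kᗮᗮ := by
    rw [Submodule.mem_orthogonal]
    intro ψ hψ
    -- from ψ ⊥ range M : ψ (inl (o y)) + ψ (inr (i' y)) = 0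
    have hψy : ∀ y : Y, ψ (Sum.inl (o y)) + ψ (Sum.inr (i' y)) = 0 := by
      intro y
      have h0 := (Submodule.mem_orthogonal _ _).mp hψ
        (M (WithLp.toLp 2 (fun y' => if y' = y then (1:ℝ) else 0))) ⟨_, rfl⟩
      rw [hinner] at h0
      have hsum : ∑ st : S ⊕ T, (M (WithLp.toLp 2 (fun y' => if y' = y then (1:ℝ) else 0))) st * ψ st
          = ψ (Sum.inl (o y)) + ψ (Sum.inr (i' y)) := by
        rw [Fintype.sum_sum_type]
        have h1 : ∑ s : S, (pushforward o (fun y' => if y' = y then 1 else 0) s) * ψ (Sum.inl s)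
            = ψ (Sum.inl (o y)) := by
          rw [show ∀ (z : S → ℝ) (u : S → ℝ), ∑ s, z s * u s = ∑ s, u s * z s from
            fun z u => Finset.sum_congr rfl fun s _ => mul_comm _ _]
          rw [sum_mul_pushforward o (fun s => ψ (Sum.inl s))]
          simp
        have h2 : ∑ t : T, (pushforward i' (fun y' => if y' = y then 1 else 0) t) * ψ (Sum.inr t)
            = ψ (Sum.inr (i' y)) := by
          rw [show ∀ (z : T → ℝ) (u : T → ℝ), ∑ t, z t * u t = ∑ t, u t * z t from
            fun z u => Finset.sum_congr rfl fun t _ => mul_comm _ _]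
          rw [sum_mul_pushforward i' (fun t => ψ (Sum.inr t))]
          simp
        exact congrArg₂ (· + ·) h1 h2
      rw [hsum] at h0
      exact h0
    -- factor ψ through P
    obtain ⟨h, hf, hg⟩ := hdesc (fun s => ψ (Sum.inl s)) (fun t => -ψ (Sum.inr t))
      (funext fun y => by have := hψy y; simp only [Function.comp_apply]; linarith)
    rw [hinner]
    have : ∑ st : S ⊕ T, x st * ψ st
        = (∑ p : P, h p * pushforward jS a p) - ∑ p : P, h p * pushforward jT c p := by
      rw [sum_mul_pushforward jS h a, sum_mul_pushforward jT h c, Fintype.sum_sum_type]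
      have e1 : ∀ s : S, x (Sum.inl s) * ψ (Sum.inl s) = h (jS s) * a s := by
        intro s
        have := congrFun hf s
        simp only [Function.comp_apply] at this
        rw [hx]
        simp [← this, mul_comm]
      have e2 : ∀ t : T, x (Sum.inr t) * ψ (Sum.inr t) = -(h (jT t) * c t) := by
        intro t
        have := congrFun hg t
        simp only [Function.comp_apply] at this
        rw [hx]
        simp only [Sum.elim_inr]
        have hψt : ψ (Sum.inr t) = -h (jT t) := by linarith [this.symm ▸ (rfl : -ψ (Sum.inr t) = -ψ (Sum.inr t))]
        rw [hψt]; ring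
      rw [Finset.sum_congr rfl fun s _ => e1 s, Finset.sum_congr rfl fun t _ => e2 t]
      rw [Finset.sum_neg_distrib]
      ring
    rw [Finset.sum_congr rfl fun st _ => mul_comm (ψ st) (x st), this, hac, sub_self]
  rw [Submodule.orthogonal_orthogonal] at hxK
  obtain ⟨O, hO⟩ := hxK
  exact ⟨O, funext fun s => congrArg (fun z : EuclideanSpace ℝ (S ⊕ T) => z (Sum.inl s)) hO,
    funext fun t => congrArg (fun z : EuclideanSpace ℝ (S ⊕ T) => z (Sum.inr t)) hO⟩

/-- The black-boxing of an open dynamical system with legs `i : X → S`, `o : Y → S`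
and vector field `v` on `ℝ^S`:  all tuples `((x ∘ i, I), (x ∘ o, O))` where `x` is a
steady state with inflows `I` and outflows `O`. -/
def blackBox {X Y S : Type} [Fintype X] [Fintype Y] [Fintype S]
    (i : X → S) (o : Y → S) (v : (S → ℝ) → (S → ℝ)) :
    Set (((X → ℝ) × (X → ℝ)) × ((Y → ℝ) × (Y → ℝ))) :=
  { pq | ∃ x : S → ℝ,
      v x + pushforward i pq.1.2 - pushforward o pq.2.2 = 0 ∧
      pq.1.1 = x ∘ i ∧ pq.2.1 = x ∘ o }

/-- Functoriality of black-boxing: the black-boxing of a composite open dynamical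
system is the relational composite of the black-boxings. -/
theorem blackBox_functorial {X Y Z S T P : Type}
    [Fintype X] [Fintype Y] [Fintype Z] [Fintype S] [Fintype T] [Fintype P]
    (i : X → S) (o : Y → S) (v : (S → ℝ) → (S → ℝ)) (hv : ContDiff ℝ (⊤ : ℕ∞) v)
    (i' : Y → T) (o' : Z → T) (w : (T → ℝ) → (T → ℝ)) (hw : ContDiff ℝ (⊤ : ℕ∞) w)
    (jS : S → P) (jT : T → P)
    (hpo : CategoryTheory.IsPushout (C := Type) (TypeCat.ofHom o)
      (TypeCat.ofHom i') (TypeCat.ofHom jS)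
      (TypeCat.ofHom jT)) :
    ∀ (pI : (X → ℝ) × (X → ℝ)) (rQ : (Z → ℝ) × (Z → ℝ)),
      (pI, rQ) ∈ blackBox (jS ∘ i) (jT ∘ o')
          (fun ψ => pushforward jS (v (pullback jS ψ)) + pushforward jT (w (pullback jT ψ))) ↔
      ∃ qO : (Y → ℝ) × (Y → ℝ),
        (pI, qO) ∈ blackBox i o v ∧ (qO, rQ) ∈ blackBox i' o' w := by
  intro pI rQ
  have hcomm : ∀ y : Y, jS (o y) = jT (i' y) := by
    intro y
    have := CategoryTheory.types_congr_hom hpo.w y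
    simpa [CategoryTheory.types_comp_apply] using this
  have hdesc : ∀ (f : S → ℝ) (g : T → ℝ), f ∘ o = g ∘ i' →
      ∃ h : P → ℝ, f = h ∘ jS ∧ g = h ∘ jT := by
    intro f g hfg
    have hw' : CategoryTheory.CategoryStruct.comp (obj := Type) (TypeCat.ofHom o) (TypeCat.ofHom f)
        = CategoryTheory.CategoryStruct.comp (obj := Type) (TypeCat.ofHom i') (TypeCat.ofHom g) := by
      apply TypeCat.homEquiv.injective
      funext y
      simpa [CategoryTheory.types_comp_apply] using congrFun hfg y
    refine ⟨hpo.desc (TypeCat.ofHom f) (TypeCat.ofHom g) hw', ?_, ?_⟩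
    · funext s
      exact (CategoryTheory.types_congr_hom (hpo.inl_desc (TypeCat.ofHom f) (TypeCat.ofHom g) hw') s).symm
    · funext t
      exact (CategoryTheory.types_congr_hom (hpo.inr_desc (TypeCat.ofHom f) (TypeCat.ofHom g) hw') t).symm
  constructor
  · rintro ⟨x, hsteady, hp, hr⟩
    have hsteady' : pushforward jS (v (pullback jS x)) + pushforward jT (w (pullback jT x))
        + pushforward (jS ∘ i) pI.2 - pushforward (jT ∘ o') rQ.2 = 0 := hsteady
    set a : S → ℝ := v (pullback jS x) + pushforward i pI.2 with ha
    set c : T → ℝ := pushforward o' rQ.2 - w (pullback jT x) with hc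
    have hac : pushforward jS a = pushforward jT c := by
      rw [← sub_eq_zero, ha, hc, pushforward_add, pushforward_sub,
        ← pushforward_comp i jS, ← pushforward_comp o' jT, ← hsteady']
      abel
    obtain ⟨O, hOa, hOc⟩ := flow_exists o i' jS jT hdesc a c hac
    refine ⟨(pullback o (pullback jS x), O), ⟨pullback jS x, ?_, hp, rfl⟩,
      ⟨pullback jT x, ?_, ?_, hr⟩⟩
    · rw [hOa, ha]; exact sub_self _
    · rw [hOc, hc]; abel
    · funext y
      exact congrArg x (hcomm y)
  · rintro ⟨⟨q, O⟩, ⟨xS, hFs, hFp, hFq⟩, ⟨xT, hGs, hGq, hGr⟩⟩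
    have hqq : xS ∘ o = xT ∘ i' := by
      rw [← hFq, ← hGq]
    obtain ⟨h, hhS, hhT⟩ := hdesc xS xT hqq
    refine ⟨h, ?_, ?_, ?_⟩
    · show pushforward jS (v (pullback jS h)) + pushforward jT (w (pullback jT h))
        + pushforward (jS ∘ i) pI.2 - pushforward (jT ∘ o') rQ.2 = 0
      have e1 : pullback jS h = xS := hhS.symm
      have e2 : pullback jT h = xT := hhT.symm
      have hv' : v xS = pushforward o O - pushforward i pI.2 := by
        rw [eq_sub_iff_add_eq, ← sub_eq_zero]; exact hFs
      have hw'' : w xT = pushforward o' rQ.2 - pushforward i' O := by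
        rw [eq_sub_iff_add_eq, ← sub_eq_zero]
        exact hGs
      have key : pushforward jS (pushforward o O) = pushforward jT (pushforward i' O) := by
        rw [← pushforward_comp o jS, ← pushforward_comp i' jT,
          show jS ∘ o = jT ∘ i' from funext hcomm]
      rw [e1, e2, hv', hw'', pushforward_sub jS, pushforward_sub jT,
        pushforward_comp i jS, pushforward_comp o' jT, key]
      abel
    · rw [hFp, hhS]; rfl
    · rw [hGr, hhT]; rfl
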